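/- Let T be a rooted tree with n nodes weighted by a size-constrained max-heap weight function, and let u be any node with an ancestor of weight ≥ k. Among the ancestors t of u that are top nodes of heavy paths, the lowest such t with weight(t) ≥ k exists whenever weight(root) ≥ k, and the heavy path with top node t contains SWA(u,k). -/
import Mathlib


/-- A rooted tree on a node type `V`, given by a parent function together with a
depth function certifying acyclicity (the parent of a non-root node has depth one less). -/
structure PTree (V : Type*) where
  root : V
  parent : V → V
  parent_root : parent root = root
  depth : V → ℕ
  depth_root : depth root = 0
  depth_parent : ∀ v, v ≠ root → depth (parent v) + 1 = depth v

namespace PTree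

variable {V : Type*}

/-- `T.Anc a u` : `a` is an ancestor of `u` (a node is an ancestor of itself). -/
def Anc (T : PTree V) (a u : V) : Prop := ∃ m, T.parent^[m] u = a

/-- number of nodes in the subtree rooted at `u`. -/
noncomputable def size (T : PTree V) (u : V) : ℕ := Set.ncard {v | T.Anc u v}

/-- `v` is a child of `u`. -/
def IsChild (T : PTree V) (v u : V) : Prop := v ≠ T.root ∧ T.parent v = u

def IsLeaf (T : PTree V) (u : V) : Prop := ∀ v, ¬ T.IsChild v u

/-- number of leaves in the subtree rooted at `u`. -/
noncomputable def leafCount (T : PTree V) (u : V) : ℕ :=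
  Set.ncard {v | T.Anc u v ∧ T.IsLeaf v}

/-- `heavy` assigns to each internal node a child of maximal subtree size (its heavy child). -/
def IsHeavy (T : PTree V) (heavy : V → V) : Prop :=
  ∀ u, (∃ v, T.IsChild v u) →
    T.IsChild (heavy u) u ∧ ∀ w, T.IsChild w u → T.size w ≤ T.size (heavy u)

/-- `t` is the top node of some heavy path: it is the root or a light child. -/
def IsTop (T : PTree V) (heavy : V → V) (t : V) : Prop :=
  t = T.root ∨ heavy (T.parent t) ≠ t

/-- number of light edges on the root-to-`u` path. -/
noncomputable def lightCount (T : PTree V) (heavy : V → V) (u : V) : ℕ :=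
  Set.ncard {v | T.Anc v u ∧ v ≠ T.root ∧ heavy (T.parent v) ≠ v}

/-- `pt` maps every node to the top node of the heavy path containing it. -/
def IsPathTop (T : PTree V) (heavy : V → V) (pt : V → V) : Prop :=
  (∀ v, T.Anc (pt v) v ∧ T.IsTop heavy (pt v)) ∧
  (∀ v, v ≠ pt v → heavy (T.parent v) = v ∧ pt (T.parent v) = pt v) ∧
  (∀ v, pt (pt v) = pt v)

/-- `weight` is a size-constrained max-heap weight function. -/
def IsSCMaxHeap (T : PTree V) (weight : V → ℕ) : Prop :=
  (∀ u, 1 ≤ weight u) ∧ (∀ u, weight u ≤ T.size u) ∧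
  (∀ a u, T.Anc a u → weight u ≤ weight a)

end PTree

section Aux

variable {V : Type*} (T : PTree V)

lemma anc_refl (v : V) : T.Anc v v := ⟨0, rfl⟩

lemma anc_trans {a b c : V} (h1 : T.Anc a b) (h2 : T.Anc b c) : T.Anc a c := by
  obtain ⟨m, hm⟩ := h1; obtain ⟨n, hn⟩ := h2
  exact ⟨m + n, by rw [Function.iterate_add_apply, hn, hm]⟩

lemma depth_parent_le (v : V) : T.depth (T.parent v) ≤ T.depth v := by
  by_cases h : v = T.root
  · subst h; rw [T.parent_root]
  · have := T.depth_parent v h; omega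

lemma anc_depth_le {a v : V} (h : T.Anc a v) : T.depth a ≤ T.depth v := by
  obtain ⟨m, hm⟩ := h
  subst hm
  induction m with
  | zero => rfl
  | succ n ih =>
    rw [Function.iterate_succ_apply']
    exact le_trans (depth_parent_le T _) ih

lemma parent_iterate_root (m : ℕ) : T.parent^[m] T.root = T.root := by
  induction m with
  | zero => rfl
  | succ n ih => rw [Function.iterate_succ_apply', ih, T.parent_root]

lemma depth_eq_zero {v : V} (h : T.depth v = 0) : v = T.root := by
  by_contra hv
  have := T.depth_parent v hv
  omega

lemma anc_root (v : V) : T.parent^[T.depth v] v = T.root := by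
  generalize hn : T.depth v = n
  induction n generalizing v with
  | zero => rw [Function.iterate_zero_apply]; exact depth_eq_zero T hn
  | succ n ih =>
    by_cases hv : v = T.root
    · subst hv; exact parent_iterate_root T _
    · have hd := T.depth_parent v hv
      rw [Function.iterate_succ_apply]
      exact ih (T.parent v) (by omega)

lemma anc_canonical {a v : V} {m : ℕ} (h : T.parent^[m] v = a) :
    T.parent^[T.depth v - T.depth a] v = a := by
  induction m generalizing v with
  | zero => simp at h; subst h; simp
  | succ n ih =>
    by_cases hv : v = T.root
    · subst hv
      rw [parent_iterate_root]
      have : a = T.root := by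
        rw [← h]; exact parent_iterate_root T _
      rw [this]
    · rw [Function.iterate_succ_apply] at h
      have hle : T.depth a ≤ T.depth (T.parent v) := anc_depth_le T ⟨n, h⟩
      have hd := T.depth_parent v hv
      have := ih h
      have heq : T.depth v - T.depth a = (T.depth (T.parent v) - T.depth a) + 1 := by omega
      rw [heq, Function.iterate_succ_apply, this]

lemma anc_of_depth_le {a b v : V} (ha : T.Anc a v) (hb : T.Anc b v)
    (hle : T.depth a ≤ T.depth b) : T.Anc a b := by
  obtain ⟨m, hm⟩ := ha; obtain ⟨n, hn⟩ := hb
  have ha' := anc_canonical T hm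
  have hb' := anc_canonical T hn
  have hav := anc_depth_le T ⟨m, hm⟩
  have hbv := anc_depth_le T ⟨n, hn⟩
  have harith : T.depth b - T.depth a + (T.depth v - T.depth b) = T.depth v - T.depth a := by
    omega
  refine ⟨T.depth b - T.depth a, ?_⟩
  calc T.parent^[T.depth b - T.depth a] b
      = T.parent^[T.depth b - T.depth a] (T.parent^[T.depth v - T.depth b] v) := by rw [hb']
    _ = T.parent^[(T.depth b - T.depth a) + (T.depth v - T.depth b)] v :=
        (Function.iterate_add_apply _ _ _ _).symm
    _ = T.parent^[T.depth v - T.depth a] v := by rw [harith]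
    _ = a := ha'

end Aux

section Aux2

variable {V : Type*} {T : PTree V} {heavy pt : V → V}

lemma pt_root (hpt : T.IsPathTop heavy pt) : pt T.root = T.root := by
  obtain ⟨m, hm⟩ := (hpt.1 T.root).1
  rw [← hm, parent_iterate_root]

lemma pt_of_top (hpt : T.IsPathTop heavy pt) {t : V} (ht : T.IsTop heavy t) :
    pt t = t := by
  by_contra h
  have h' : t ≠ pt t := fun he => h he.symm
  have := (hpt.2.1 t h').1
  rcases ht with h1 | h2
  · exact h (h1 ▸ pt_root hpt)
  · exact h2 this

lemma pt_iterate (hpt : T.IsPathTop heavy pt) (v : V) :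
    ∀ m, T.Anc (pt v) (T.parent^[m] v) → pt (T.parent^[m] v) = pt v := by
  intro m
  induction m with
  | zero => intro _; rfl
  | succ n ih =>
    intro h
    rw [Function.iterate_succ_apply'] at h ⊢
    set x := T.parent^[n] v with hx
    have hax : T.Anc (pt v) x := anc_trans T h ⟨1, rfl⟩
    have hpx : pt x = pt v := ih hax
    by_cases hxe : x = pt v
    · -- then parent x is above pt v; forces pt v = root
      by_cases hr : pt v = T.root
      · rw [hxe, hr, T.parent_root, pt_root hpt]
      · exfalso
        have hd1 := T.depth_parent (pt v) hr
        have hd2 := anc_depth_le T h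
        rw [hxe] at hd2
        omega
    · have hne : x ≠ pt x := by rw [hpx]; exact hxe
      have := (hpt.2.1 x hne).2
      rw [this, hpx]

end Aux2

/-- if k ≤ weight(root), then among the ancestors t of u that are top nodes
of heavy paths, the lowest one with weight(t) ≥ k exists, and the heavy path with top node t
contains SWA(u,k), the lowest ancestor of u with weight ≥ k. -/
theorem stmt14 {V : Type*} [Fintype V] (T : PTree V) (heavy : V → V) (pt : V → V)
    (weight : V → ℕ) (hheavy : T.IsHeavy heavy) (hpt : T.IsPathTop heavy pt)
    (hw : T.IsSCMaxHeap weight) (u : V) (k : ℕ) (hk : 1 ≤ k)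
    (hroot : k ≤ weight T.root) :
    ∃ t, T.Anc t u ∧ T.IsTop heavy t ∧ k ≤ weight t ∧
      (∀ t', T.Anc t' u → T.IsTop heavy t' → k ≤ weight t' → T.depth t' ≤ T.depth t) ∧
      ∀ w', T.Anc w' u → k ≤ weight w' →
        (∀ a, T.Anc a u → k ≤ weight a → T.depth a ≤ T.depth w') → pt w' = t := by
  classical
  have hrootanc : T.Anc T.root u := ⟨T.depth u, anc_root T u⟩
  -- the set of top ancestors with weight ≥ k, as a Finset
  set S : Finset V := Finset.univ.filter
    (fun t => T.Anc t u ∧ T.IsTop heavy t ∧ k ≤ weight t) with hS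
  have hrootS : T.root ∈ S := by
    simp only [hS, Finset.mem_filter, Finset.mem_univ, true_and]
    exact ⟨hrootanc, Or.inl rfl, hroot⟩
  have hmemS : ∀ x, T.Anc x u → T.IsTop heavy x → k ≤ weight x → x ∈ S := by
    intro x a b c
    simp only [hS, Finset.mem_filter, Finset.mem_univ, true_and]
    exact ⟨a, b, c⟩
  obtain ⟨t, htS, htmax⟩ := S.exists_max_image T.depth ⟨T.root, hrootS⟩
  simp only [hS, Finset.mem_filter, Finset.mem_univ, true_and] at htS
  obtain ⟨htanc, httop, htw⟩ := htS
  refine ⟨t, htanc, httop, htw, ?_, ?_⟩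
  · intro t' h1 h2 h3
    exact htmax t' (hmemS t' h1 h2 h3)
  · intro w' hwanc hwk hwmax
    -- pt w' is a top ancestor of u with weight ≥ k
    have hptanc : T.Anc (pt w') w' := (hpt.1 w').1
    have hptancu : T.Anc (pt w') u := anc_trans T hptanc hwanc
    have hptw : k ≤ weight (pt w') := le_trans hwk (hw.2.2 _ _ hptanc)
    have hptle : T.depth (pt w') ≤ T.depth t :=
      htmax (pt w') (hmemS (pt w') hptancu (hpt.1 w').2 hptw)
    have htlew : T.depth t ≤ T.depth w' := hwmax t htanc htw
    -- t is an ancestor of w'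
    have htancw : T.Anc t w' := anc_of_depth_le T htanc hwanc htlew
    -- pt w' is an ancestor of t
    have hptanct : T.Anc (pt w') t := anc_of_depth_le T hptancu htanc hptle
    obtain ⟨m, hm⟩ := htancw
    have : pt (T.parent^[m] w') = pt w' := pt_iterate hpt w' m (hm ▸ hptanct)
    rw [hm] at this
    rw [← this, pt_of_top hpt httop]
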